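/- arXiv:2001.00979 — 4 statements merged into one kernel-verified Lean document; each statement's English description precedes it below -/
import Mathlib

section
/- Let W, ΔS, γ, T_h, T_c be positive reals with T_h > T_c. The function P(t1, t3) = ((T_h - T_c)·ΔS)/(t1 + t3) - (γ·W²)·(1/t1 + 1/t3)/(t1 + t3), defined for t1, t3 > 0, attains its maximum at t1 = t3 = 4γW²/((T_h - T_c)·ΔS). -/
/-! With `A = (T_h - T_c)ΔS`, `c = γW²` and `s = t1 + t3`, the power is `A/s - c/(t1 t3)`.
Since `t1 t3 ≤ s²/4`, it is at most `A u - 4c u²` with `u = 1/s`, a concave quadratic in `u`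
whose maximum `A²/(16c)` is attained at `u = A/(8c)`, i.e. at `t1 = t3 = 4c/A`. -/

noncomputable def cyclePower (A c t1 t3 : ℝ) : ℝ :=
  A / (t1 + t3) - c * (1 / t1 + 1 / t3) / (t1 + t3)

lemma mul_sub_mul_sq_le_sq_div (A c u : ℝ) (hc : 0 < c) :
    A * u - 4 * c * u ^ 2 ≤ A ^ 2 / (16 * c) := by
  rw [le_div_iff₀ (by positivity)]
  nlinarith [sq_nonneg (A - 8 * c * u)]

lemma cyclePower_eq {t1 t3 : ℝ} (A c : ℝ) (h1 : t1 ≠ 0) (h3 : t3 ≠ 0) (hs : t1 + t3 ≠ 0) :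
    cyclePower A c t1 t3 = A / (t1 + t3) - c / (t1 * t3) := by
  unfold cyclePower
  field_simp
  ring

lemma cyclePower_le {t1 t3 : ℝ} (A : ℝ) {c : ℝ} (hc : 0 < c) (h1 : 0 < t1) (h3 : 0 < t3) :
    cyclePower A c t1 t3 ≤ A ^ 2 / (16 * c) := by
  have hs : 0 < t1 + t3 := add_pos h1 h3
  have hprod : 4 * (t1 * t3) ≤ (t1 + t3) ^ 2 := by nlinarith [sq_nonneg (t1 - t3)]
  calc cyclePower A c t1 t3 = A / (t1 + t3) - c / (t1 * t3) :=
        cyclePower_eq A c h1.ne' h3.ne' hs.ne'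
    _ ≤ A / (t1 + t3) - c / ((t1 + t3) ^ 2 / 4) := by
        gcongr
        linarith
    _ = A * (1 / (t1 + t3)) - 4 * c * (1 / (t1 + t3)) ^ 2 := by
        field_simp
    _ ≤ A ^ 2 / (16 * c) := mul_sub_mul_sq_le_sq_div A c _ hc

lemma cyclePower_diag {A c : ℝ} (hA : A ≠ 0) (hc : c ≠ 0) :
    cyclePower A c (4 * c / A) (4 * c / A) = A ^ 2 / (16 * c) := by
  unfold cyclePower
  field_simp
  ring

theorem power_max_time_schedule_general
    (W ΔS γ Th Tc : ℝ) (hW : 0 < W) (hS : 0 < ΔS) (hγ : 0 < γ)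
    (hT : Tc < Th)
    (P : ℝ → ℝ → ℝ)
    (hP : ∀ t1 t3, P t1 t3 =
      ((Th - Tc) * ΔS) / (t1 + t3) - (γ * W ^ 2) * (1 / t1 + 1 / t3) / (t1 + t3)) :
    ∀ t1 t3, 0 < t1 → 0 < t3 →
      P t1 t3 ≤ P (4 * γ * W ^ 2 / ((Th - Tc) * ΔS)) (4 * γ * W ^ 2 / ((Th - Tc) * ΔS)) := by
  intro t1 t3 h1 h3
  have hA : 0 < (Th - Tc) * ΔS := mul_pos (sub_pos.mpr hT) hS
  have hc : 0 < γ * W ^ 2 := by positivity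
  have hP' : P = cyclePower ((Th - Tc) * ΔS) (γ * W ^ 2) := funext₂ hP
  rw [hP', show 4 * γ * W ^ 2 = 4 * (γ * W ^ 2) by ring, cyclePower_diag hA.ne' hc.ne']
  exact cyclePower_le _ hc h1 h3

/-- The power of a finite-time Carnot-like cycle as a function of the isothermal
phase durations `t1, t3` attains its maximum at `t1 = t3 = 4γW²/((T_h - T_c)·ΔS)`. -/
theorem power_max_time_schedule
    (W ΔS γ Th Tc : ℝ) (hW : 0 < W) (hS : 0 < ΔS) (hγ : 0 < γ)
    (hTc : 0 < Tc) (hT : Tc < Th)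
    (P : ℝ → ℝ → ℝ)
    (hP : ∀ t1 t3, P t1 t3 =
      ((Th - Tc) * ΔS) / (t1 + t3) - (γ * W ^ 2) * (1 / t1 + 1 / t3) / (t1 + t3)) :
    ∀ t1 t3, 0 < t1 → 0 < t3 →
      P t1 t3 ≤ P (4 * γ * W ^ 2 / ((Th - Tc) * ΔS)) (4 * γ * W ^ 2 / ((Th - Tc) * ΔS)) :=
  power_max_time_schedule_general W ΔS γ Th Tc hW hS hγ hT P hP
end

section
/- Let T_h > T_c > 0, γ > 0, ΔS > 0, W > 0. Setting t1 = t3 = 4γW²/((T_h - T_c)·ΔS), the efficiency η = [(T_h - T_c)ΔS - γ(1/t1 + 1/t3)W²] / [T_h·ΔS - (γ/t1)W²] equals 2(T_h - T_c)/(3T_h + T_c), which equals η_C/(2 - η_C/2) where η_C = 1 - T_c/T_h. -/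
/-!
At the optimal duration `t = 4γW²/((T_h - T_c)ΔS)` each isothermal phase dissipates exactly a
quarter of the reversible work `(T_h - T_c)ΔS`, so the efficiency is the ratio
`(T_h - T_c)ΔS/2 : (3T_h + T_c)ΔS/4`, independent of `γ`, `W` and `ΔS`.
-/

section Field

variable {K : Type*} [Field K] [CharZero K]

lemma div_div_mul_sq_eq_div_four (γ W x : K) (hγ : γ ≠ 0) (hW : W ≠ 0) :
    γ / (4 * γ * W ^ 2 / x) * W ^ 2 = x / 4 := by
  field_simp

lemma efficiency_eq_of_quarter_dissipation {Th Tc ΔS : K} (hS : ΔS ≠ 0) :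
    ((Th - Tc) * ΔS - (Th - Tc) * ΔS / 2) / (Th * ΔS - (Th - Tc) * ΔS / 4) =
      2 * (Th - Tc) / (3 * Th + Tc) := by
  calc _ = 2 * (Th - Tc) * (ΔS / 4) / ((3 * Th + Tc) * (ΔS / 4)) := by ring_nf
    _ = _ := mul_div_mul_right _ _ (by simpa using hS)

lemma div_eq_carnot_div {Th Tc : K} (hTh : Th ≠ 0) :
    2 * (Th - Tc) / (3 * Th + Tc) = (1 - Tc / Th) / (2 - (1 - Tc / Th) / 2) := by
  calc _ = 2 * (Th - Tc) * (2 * Th)⁻¹ / ((3 * Th + Tc) * (2 * Th)⁻¹) :=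
        (mul_div_mul_right _ _ (by simpa using hTh)).symm
    _ = _ := by field_simp; ring

end Field

/-- Efficiency at maximum power equals `2(T_h - T_c)/(3T_h + T_c) = η_C/(2 - η_C/2)`. -/
theorem efficiency_at_max_power
    (W ΔS γ Th Tc t1 t3 η ηC : ℝ) (hW : 0 < W) (hS : 0 < ΔS) (hγ : 0 < γ)
    (hTc : 0 < Tc) (hT : Tc < Th)
    (ht1 : t1 = 4 * γ * W ^ 2 / ((Th - Tc) * ΔS))
    (ht3 : t3 = 4 * γ * W ^ 2 / ((Th - Tc) * ΔS))
    (hη : η = ((Th - Tc) * ΔS - γ * (1 / t1 + 1 / t3) * W ^ 2) /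
      (Th * ΔS - (γ / t1) * W ^ 2))
    (hηC : ηC = 1 - Tc / Th) :
    η = 2 * (Th - Tc) / (3 * Th + Tc) ∧ η = ηC / (2 - ηC / 2) := by
  have hquarter : γ / t1 * W ^ 2 = (Th - Tc) * ΔS / 4 :=
    ht1 ▸ div_div_mul_sq_eq_div_four γ W _ hγ.ne' hW.ne'
  have hhalf : γ * (1 / t1 + 1 / t3) * W ^ 2 = (Th - Tc) * ΔS / 2 := by
    rw [ht3, ← ht1]
    linear_combination 2 * hquarter
  have hη' : η = 2 * (Th - Tc) / (3 * Th + Tc) := by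
    rw [hη, hquarter, hhalf, efficiency_eq_of_quarter_dissipation hS.ne']
  refine ⟨hη', ?_⟩
  rw [hη', hηC, div_eq_carnot_div (hTc.trans hT).ne']
end

section
/- Let T_h > T_c > 0, k_B > 0, M > 0, γ > 0. The maximum of P(λ, σ) = k_B(T_h - T_c)·λ/2 - γλ²σ² over all λ ≥ 0 and σ ≥ k_B T_c/√(γM) satisfying γλ + k_B T_c/σ² ≤ √(γM)/σ equals (M/8)·((T_h - T_c)²)/(T_c(T_c + T_h)) = (M/8)·(T_h/T_c - 1)·(T_h/T_c - 1)/(T_h/T_c + 1). -/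
/-!
Write `b = k_B (T_h - T_c) / 2`, `c = k_B T_c` and `u = γ λ σ²`. Then `P = λ (b - u)`, and the
constraint, multiplied by `σ²` and squared, reads `(u + c)² ≤ γ M σ²`, i.e. `λ (u + c)² ≤ M u`.
So `P ≤ M u (b - u) / (u + c)²`, and the identity
`b² (u + c)² - 4 c (b + c) u (b - u) = ((b + 2 c) u - b c)²` bounds this by `M b² / (4 c (b + c))`,
with equality at `u = b c / (b + 2 c)`, which a suitable choice of `σ` and `λ` realises.
-/

theorem four_mul_mul_sub_le_sq_mul_add_sq (b c u : ℝ) :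
    4 * c * (b + c) * (u * (b - u)) ≤ b ^ 2 * (u + c) ^ 2 :=
  sub_nonneg.1 <| by
    rw [show b ^ 2 * (u + c) ^ 2 - 4 * c * (b + c) * (u * (b - u)) =
      ((b + 2 * c) * u - b * c) ^ 2 by ring]
    positivity

theorem mul_sub_le_of_mul_add_sq_le {b c u lam M : ℝ} (hb : 0 ≤ b) (hc : 0 < c) (hM : 0 ≤ M)
    (hu : 0 ≤ u) (hlam : 0 ≤ lam) (h : lam * (u + c) ^ 2 ≤ M * u) :
    lam * (b - u) ≤ M * b ^ 2 / (4 * c * (b + c)) := by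
  rcases le_or_gt b u with hbu | hub
  · exact (mul_nonpos_of_nonneg_of_nonpos hlam (by linarith)).trans (by positivity)
  rw [le_div_iff₀ (by positivity)]
  refine le_of_mul_le_mul_right ?_ (by positivity : 0 < (u + c) ^ 2)
  calc lam * (b - u) * (4 * c * (b + c)) * (u + c) ^ 2
      = lam * (u + c) ^ 2 * (4 * c * (b + c) * (b - u)) := by ring
    _ ≤ M * u * (4 * c * (b + c) * (b - u)) := by gcongr
    _ = M * (4 * c * (b + c) * (u * (b - u))) := by ring
    _ ≤ M * (b ^ 2 * (u + c) ^ 2) :=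
        mul_le_mul_of_nonneg_left (four_mul_mul_sub_le_sq_mul_add_sq b c u) hM
    _ = M * b ^ 2 * (u + c) ^ 2 := by ring

section GradientBound

variable {b c γ M : ℝ}

theorem power_le_of_gradient_bound (hb : 0 ≤ b) (hc : 0 < c) (hγ : 0 < γ) (hM : 0 < M)
    {lam σ : ℝ} (hlam : 0 ≤ lam) (hσ : c / √(γ * M) ≤ σ)
    (hgrad : γ * lam + c / σ ^ 2 ≤ √(γ * M) / σ) :
    b * lam - γ * lam ^ 2 * σ ^ 2 ≤ M * b ^ 2 / (4 * c * (b + c)) := by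
  have hσ : 0 < σ := lt_of_lt_of_le (by positivity) hσ
  have hmul : γ * lam * σ ^ 2 + c ≤ √(γ * M) * σ := by
    have := mul_le_mul_of_nonneg_right hgrad (sq_nonneg σ)
    field_simp at this
    linarith
  have hsq : (γ * lam * σ ^ 2 + c) ^ 2 ≤ γ * M * σ ^ 2 := by
    calc (γ * lam * σ ^ 2 + c) ^ 2 ≤ (√(γ * M) * σ) ^ 2 := by gcongr
      _ = γ * M * σ ^ 2 := by rw [mul_pow, Real.sq_sqrt (by positivity)]
  calc b * lam - γ * lam ^ 2 * σ ^ 2 = lam * (b - γ * lam * σ ^ 2) := by ring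
    _ ≤ M * b ^ 2 / (4 * c * (b + c)) := by
      refine mul_sub_le_of_mul_add_sq_le hb hc hM.le (by positivity) hlam ?_
      calc lam * (γ * lam * σ ^ 2 + c) ^ 2 ≤ lam * (γ * M * σ ^ 2) := by gcongr
        _ = M * (γ * lam * σ ^ 2) := by ring

theorem power_optimum_mem (hb : 0 ≤ b) (hc : 0 < c) (hγ : 0 < γ) (hM : 0 < M) :
    M * b ^ 2 / (4 * c * (b + c)) ∈
      {p : ℝ | ∃ lam σ : ℝ, 0 ≤ lam ∧ c / √(γ * M) ≤ σ ∧
        γ * lam + c / σ ^ 2 ≤ √(γ * M) / σ ∧ p = b * lam - γ * lam ^ 2 * σ ^ 2} := by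
  set u := b * c / (b + 2 * c)
  set σ := (u + c) / √(γ * M)
  have hs : 0 < √(γ * M) := by positivity
  have hu : 0 ≤ u := by positivity
  refine ⟨u / (γ * σ ^ 2), σ, by positivity, div_le_div_of_nonneg_right (by linarith) hs.le,
    le_of_eq ?_, ?_⟩
  · simp only [σ]
    field_simp
  · simp only [σ, u]
    field_simp
    rw [Real.sq_sqrt (by positivity)]
    ring

theorem isGreatest_power_of_gradient_bound (hb : 0 ≤ b) (hc : 0 < c) (hγ : 0 < γ) (hM : 0 < M) :
    IsGreatest
      {p : ℝ | ∃ lam σ : ℝ, 0 ≤ lam ∧ c / √(γ * M) ≤ σ ∧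
        γ * lam + c / σ ^ 2 ≤ √(γ * M) / σ ∧ p = b * lam - γ * lam ^ 2 * σ ^ 2}
      (M * b ^ 2 / (4 * c * (b + c))) := by
  refine ⟨power_optimum_mem hb hc hγ hM, ?_⟩
  rintro p ⟨lam, σ, hlam, hσ, hgrad, rfl⟩
  exact power_le_of_gradient_bound hb hc hγ hM hlam hσ hgrad

end GradientBound

/-- The constrained maximum of `P(λ,σ) = k_B(T_h-T_c)λ/2 - γλ²σ²` over `λ ≥ 0`,
`σ ≥ k_B T_c/√(γM)` with `γλ + k_B T_c/σ² ≤ √(γM)/σ` equals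
`(M/8)(T_h-T_c)²/(T_c(T_c+T_h)) = (M/8)(T_h/T_c - 1)(T_h/T_c - 1)/(T_h/T_c + 1)`. -/
theorem constrained_power_max
    (Th Tc kB M γ : ℝ) (hTc : 0 < Tc) (hT : Tc < Th) (hkB : 0 < kB)
    (hM : 0 < M) (hγ : 0 < γ) :
    IsGreatest
      {p : ℝ | ∃ lam σ : ℝ, 0 ≤ lam ∧ kB * Tc / Real.sqrt (γ * M) ≤ σ ∧
        γ * lam + kB * Tc / σ ^ 2 ≤ Real.sqrt (γ * M) / σ ∧
        p = kB * (Th - Tc) * lam / 2 - γ * lam ^ 2 * σ ^ 2}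
      ((M / 8) * (Th - Tc) ^ 2 / (Tc * (Tc + Th))) ∧
    (M / 8) * (Th - Tc) ^ 2 / (Tc * (Tc + Th)) =
      (M / 8) * (Th / Tc - 1) * ((Th / Tc - 1) / (Th / Tc + 1)) := by
  have hTh : 0 < Th := hTc.trans hT
  refine ⟨?_, by field_simp; ring⟩
  have h := isGreatest_power_of_gradient_bound (b := kB * (Th - Tc) / 2) (c := kB * Tc)
    (by have := sub_pos.2 hT; positivity) (by positivity) hγ hM
  convert h using 1
  · simp only [mul_div_right_comm _ _ (2 : ℝ)]
  · rw [show kB * (Th - Tc) / 2 + kB * Tc = kB * (Tc + Th) / 2 by ring]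
    field_simp
    ring
end

section
/- Let T_h > T_c > 0. Then η_SS ≤ η_CA ≤ η ≤ η_C, where η_SS = 2(T_h - T_c)/(3T_h + T_c), η_CA = 1 - √(T_c/T_h), η = (T_h - T_c)/(T_h + T_c), and η_C = 1 - T_c/T_h. -/
/-!
Everything depends only on the temperature ratio `r = T_c / T_h ∈ (0, 1)`: the efficiencies are
`2(1 - r)/(3 + r)`, `1 - √r`, `(1 - r)/(1 + r)` and `1 - r`. Writing `r = s²`, the first two
inequalities reduce to `(1 - s)³ ≥ 0` and `s (1 - s)² ≥ 0`, the last one to `r (1 - r) ≥ 0`.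
-/

namespace Real

theorem two_mul_one_sub_div_three_add_le_one_sub_sqrt {r : ℝ} (hr₀ : 0 ≤ r) (hr₁ : r ≤ 1) :
    2 * (1 - r) / (3 + r) ≤ 1 - √r := by
  obtain ⟨s, hs₀, rfl⟩ : ∃ s, 0 ≤ s ∧ r = s ^ 2 := ⟨√r, sqrt_nonneg r, (sq_sqrt hr₀).symm⟩
  have hs₁ : s ≤ 1 := by nlinarith
  rw [sqrt_sq hs₀, div_le_iff₀ (by positivity)]
  nlinarith [pow_nonneg (sub_nonneg.mpr hs₁) 3]

theorem one_sub_sqrt_le_one_sub_div_one_add {r : ℝ} (hr₀ : 0 ≤ r) :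
    1 - √r ≤ (1 - r) / (1 + r) := by
  obtain ⟨s, hs₀, rfl⟩ : ∃ s, 0 ≤ s ∧ r = s ^ 2 := ⟨√r, sqrt_nonneg r, (sq_sqrt hr₀).symm⟩
  rw [sqrt_sq hs₀, le_div_iff₀ (by positivity)]
  nlinarith [mul_nonneg hs₀ (sq_nonneg (1 - s))]

end Real

theorem one_sub_div_one_add_le_one_sub {r : ℝ} (hr₀ : 0 ≤ r) (hr₁ : r ≤ 1) :
    (1 - r) / (1 + r) ≤ 1 - r := by
  rw [div_le_iff₀ (by positivity)]
  nlinarith [mul_nonneg hr₀ (sub_nonneg.mpr hr₁)]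

/-- Ordering of efficiencies: `η_SS ≤ η_CA ≤ η ≤ η_C`. -/
theorem efficiency_chain
    (Th Tc ηSS ηCA η ηC : ℝ) (hTc : 0 < Tc) (hT : Tc < Th)
    (hSS : ηSS = 2 * (Th - Tc) / (3 * Th + Tc))
    (hCA : ηCA = 1 - Real.sqrt (Tc / Th))
    (hη : η = (Th - Tc) / (Th + Tc))
    (hC : ηC = 1 - Tc / Th) :
    ηSS ≤ ηCA ∧ ηCA ≤ η ∧ η ≤ ηC := by
  have hTh : 0 < Th := hTc.trans hT
  have hSS' : ηSS = 2 * (1 - Tc / Th) / (3 + Tc / Th) := by rw [hSS]; field_simp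
  have hη' : η = (1 - Tc / Th) / (1 + Tc / Th) := by rw [hη]; field_simp
  have hr₀ : 0 ≤ Tc / Th := by positivity
  have hr₁ : Tc / Th ≤ 1 := (div_le_one hTh).mpr hT.le
  rw [hSS', hCA, hη', hC]
  exact ⟨Real.two_mul_one_sub_div_three_add_le_one_sub_sqrt hr₀ hr₁,
    Real.one_sub_sqrt_le_one_sub_div_one_add hr₀, one_sub_div_one_add_le_one_sub hr₀ hr₁⟩
end
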